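/- Let Λ = KQ/I be a monomial algebra and c = a_1 ⋯ a_n an underlying cycle, where each a_i is an arrow. Then the following are equivalent: (1) each arrow a_i is a perfect path; (2) the number |c| of co-elementary factors of c equals the length l(c) = n of c; (3) both (a) every nonzero nontrivial subpath p of a power c^m of c such that pq ∈ 𝔽 for some path q is perfect, and (b) a_i a_{i+1} ⋯ a_{i+m_c} ∈ 𝔽 for all 1 ≤ i ≤ n (indices mod n). -/

import Mathlib

/-! Combinatorial model of a monomial algebra `Λ = KQ/I`.

A finite quiver is given by source and target maps on a type of arrows.
A (nontrivial) path is encoded as a nonempty list of composable arrows;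
the admissible monomial ideal `I` is encoded by its set `F` of minimal
generating paths, and a path is zero in `Λ` iff it contains a member of
`F` as a contiguous subpath (infix). -/

/-- A quiver structure on arrow type `E` with vertex type `V`. -/
structure QuiverData (V E : Type) where
  src : E → V
  tgt : E → V

namespace QuiverData

variable {V E : Type} (Q : QuiverData V E)

/-- `l` is the list of arrows of a path of `Q`. -/
def IsPath (l : List E) : Prop := l.Chain' fun a b => Q.tgt a = Q.src b

/-- Two paths are composable: the target of the first equals the source of
the second (vacuously true if one of them is trivial). -/
def Composable (l m : List E) : Prop :=
  ∀ a ∈ l.getLast?, ∀ b ∈ m.head?, Q.tgt a = Q.src b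

end QuiverData

/-- A monomial algebra, encoded combinatorially: a finite quiver together with
the set `F` of minimal paths generating the admissible monomial ideal `I`. -/
structure MonomialData (V E : Type) extends QuiverData V E where
  F : Set (List E)
  F_path : ∀ f ∈ F, toQuiverData.IsPath f
  F_len : ∀ f ∈ F, 2 ≤ f.length
  F_min : ∀ f ∈ F, ∀ g, g <:+: f → (∃ f' ∈ F, f' <:+: g) → g = f
  admissible : ∃ N, ∀ l, toQuiverData.IsPath l → N ≤ l.length → ∃ f ∈ F, f <:+: l

namespace MonomialData

variable {V E : Type} (M : MonomialData V E)

/-- The path `l` is zero in `Λ`. -/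
def IsZero (l : List E) : Prop := ∃ f ∈ M.F, f <:+: l

/-- `l` is a path which is nonzero in `Λ`. -/
def Nonzero (l : List E) : Prop := M.toQuiverData.IsPath l ∧ ¬ M.IsZero l

/-- A perfect pair of nonzero nontrivial paths, after Chen–Shen–Zhou. -/
def PerfectPair (p q : List E) : Prop :=
  p ≠ [] ∧ q ≠ [] ∧ M.Nonzero p ∧ M.Nonzero q ∧
  M.toQuiverData.Composable p q ∧ M.IsZero (p ++ q) ∧
  (∀ q', q' ≠ [] → M.Nonzero q' → M.toQuiverData.Composable p q' →
      M.IsZero (p ++ q') → q <+: q') ∧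
  (∀ p', p' ≠ [] → M.Nonzero p' → M.toQuiverData.Composable p' q →
      M.IsZero (p' ++ q) → p <:+ p')

/-- A perfect path: a path appearing in a perfect path sequence
`(p₁, …, pₙ, pₙ₊₁ = p₁)`, encoded by a periodic sequence of paths each of
whose consecutive pairs is perfect. -/
def IsPerfect (p : List E) : Prop :=
  ∃ (n : ℕ) (s : ℕ → List E), 0 < n ∧ s 0 = p ∧ (∀ i, s (i + n) = s i) ∧
    ∀ i, M.PerfectPair (s i) (s (i + 1))

/-- `c` is the underlying cycle associated with the perfect path `p`:
the shortest cycle `c` with `p₁ ⋯ pₙ = cˡ` for some `l > 0`, for a perfect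
path sequence through `p`. -/
def IsUnderlyingCycleOf (c p : List E) : Prop :=
  ∃ (n : ℕ) (s : ℕ → List E), 0 < n ∧ s 0 = p ∧ (∀ i, s (i + n) = s i) ∧
    (∀ i, M.PerfectPair (s i) (s (i + 1))) ∧
    (∃ l, 0 < l ∧ ((List.range n).map s).flatten = (List.replicate l c).flatten) ∧
    (∀ c' l', 0 < l' → ((List.range n).map s).flatten = (List.replicate l' c').flatten →
      c.length ≤ c'.length)


/-- There is an overlap between the perfect paths `p` and `q` (`p` overlaps `q`). -/
def Overlap (p q : List E) : Prop :=
  ∃ x p' q' : List E, x ≠ [] ∧ p = p' ++ x ∧ q = x ++ q' ∧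
    M.Nonzero (p' ++ x ++ q') ∧ (p = q → p' ≠ [] ∧ q' ≠ [])

/-- An elementary perfect path: a source in the Hasse quiver of the left
divisibility order `⪯` on perfect paths, i.e. it is not a proper left divisor
of any perfect path. -/
def Elementary (p : List E) : Prop :=
  M.IsPerfect p ∧ ¬ ∃ q, M.IsPerfect q ∧ p <+: q ∧ p ≠ q

/-- A co-elementary perfect path: a sink in the Hasse quiver of `⪯`, i.e.
no proper left divisor of it is perfect. -/
def CoElementary (p : List E) : Prop :=
  M.IsPerfect p ∧ ¬ ∃ q, M.IsPerfect q ∧ q <+: p ∧ q ≠ p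

/-- There is an arrow `q ⟶ p` in the Hasse quiver of `(ℙ_Λ, ⪯)`:
`p ≺ q` and no perfect path lies strictly between them. -/
def HasseArrowPrec (q p : List E) : Prop :=
  M.IsPerfect p ∧ M.IsPerfect q ∧ p <+: q ∧ p ≠ q ∧
    ¬ ∃ r, M.IsPerfect r ∧ p <+: r ∧ p ≠ r ∧ r <+: q ∧ r ≠ q

end MonomialData

/-- Two cycles are equivalent (agree up to cyclic permutation): each is a
subpath of a power of the other. -/
def CyclesEquiv {E : Type} (c d : List E) : Prop :=
  ∃ m k, 0 < m ∧ 0 < k ∧ c <:+: (List.replicate m d).flatten ∧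
    d <:+: (List.replicate k c).flatten



/-!
Cut the power of `c` given by its perfect path sequence at the boundaries of the sequence: each
piece is nonzero and any two consecutive pieces span a relation. When every arrow is perfect, the
right partner of `aᵢ` is the tail of any relation along `c` that starts at `aᵢ`. The right partner
of that tail lies along `c` as well, because the relation starting at the next cut cannot sit
inside the relation at `aᵢ`. So every position of `c` starts a relation along `c`; the lengths of
these relations are nondecreasing and periodic, hence all equal to some `m + 1`. Rigidity of the
partners of single arrows then shows that `(aᵢ ⋯ a_{i+d-1}, a_{i+d} ⋯ a_{i+m})` is a perfect pair
for `1 ≤ d ≤ m`, which gives (3), and identifies the perfect paths beginning with `a₁` as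
`a₁ ⋯ a_d`, so `m_c = m`. Conversely, the single arrows are perfect by (3a) applied to the
relations of (3b). For (2), co-elementary factors are nonempty, so `n` of them multiplying to a
path of length `n` are its arrows.
-/

section Segments

variable {E : Type} {a : ℕ → E} {n : ℕ}

def seg (a : ℕ → E) (i d : ℕ) : List E := (List.range' i d).map a

@[simp] theorem seg_length (a : ℕ → E) (i d : ℕ) : (seg a i d).length = d := by
  simp [seg]

theorem seg_succ (a : ℕ → E) (i d : ℕ) : seg a i (d + 1) = a i :: seg a (i + 1) d := by
  simp [seg, List.range'_succ]

theorem seg_one (a : ℕ → E) (i : ℕ) : seg a i 1 = [a i] := rfl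

theorem seg_append (a : ℕ → E) (i d e : ℕ) : seg a i d ++ seg a (i + d) e = seg a i (d + e) := by
  rw [seg, seg, seg, ← List.map_append, ← List.range'_append, one_mul]

theorem seg_append_of_eq (a : ℕ → E) {i d i' : ℕ} (h : i + d = i') (e : ℕ) :
    seg a i d ++ seg a i' e = seg a i (d + e) :=
  h ▸ seg_append a i d e

theorem seg_concat (a : ℕ → E) (i d : ℕ) : seg a i (d + 1) = seg a i d ++ [a (i + d)] :=
  (seg_append a i d 1).symm

theorem seg_drop (a : ℕ → E) (i d t : ℕ) : (seg a i d).drop t = seg a (i + t) (d - t) := by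
  rw [seg, ← List.map_drop, List.drop_range', mul_one]; rfl

theorem seg_take (a : ℕ → E) (i d t : ℕ) (h : t ≤ d) : (seg a i d).take t = seg a i t := by
  rw [← Nat.add_sub_cancel' h, ← seg_append, List.take_left' (seg_length a i t)]

theorem seg_ne_nil (a : ℕ → E) (i : ℕ) {d : ℕ} (hd : 0 < d) : seg a i d ≠ [] :=
  List.ne_nil_of_length_pos (by simpa using hd)

theorem seg_injective (a : ℕ → E) (i : ℕ) : Function.Injective (seg a i) :=
  fun d d' h => by simpa using congrArg List.length h

theorem map_range_eq_seg (a : ℕ → E) (i d : ℕ) :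
    (List.range d).map (fun t => a (i + t)) = seg a i d := by
  have h := List.map_add_range' (a := i) 0 d 1
  rw [Nat.add_zero] at h
  rw [seg, ← h, List.map_map, List.range_eq_range']; rfl

theorem map_range_add_one_eq_seg (a : ℕ → E) (d : ℕ) :
    (List.range d).map (fun k => a (k + 1)) = seg a 1 d := by
  simp only [← map_range_eq_seg, Nat.add_comm 1]

theorem eq_seg_of_prefix {x : List E} {i d : ℕ} (h : x <+: seg a i d) :
    x = seg a i x.length :=
  (List.prefix_iff_eq_take.1 h).trans (seg_take a i d _ (by simpa using h.length_le))

theorem eq_seg_of_suffix {x : List E} {i d : ℕ} (h : x <:+ seg a i d) :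
    x = seg a (i + (d - x.length)) x.length := by
  have hx : x.length ≤ d := by simpa using h.length_le
  calc x = (seg a i d).drop (d - x.length) := by simpa using List.suffix_iff_eq_drop.1 h
    _ = seg a (i + (d - x.length)) x.length := by rw [seg_drop, Nat.sub_sub_self hx]

theorem eq_seg_of_infix {x : List E} {i d : ℕ} (h : x <:+: seg a i d) :
    ∃ t, t + x.length ≤ d ∧ x = seg a (i + t) x.length := by
  obtain ⟨u, hux, hu⟩ := List.infix_iff_prefix_suffix.1 h
  have hu' := eq_seg_of_suffix hu
  rw [hu'] at hux
  have hle : u.length ≤ d := by simpa using hu.length_le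
  have hxu : x.length ≤ u.length := by simpa using hux.length_le
  exact ⟨d - u.length, by omega, eq_seg_of_prefix hux⟩

theorem seg_prefix_seg (a : ℕ → E) (i : ℕ) {d D : ℕ} (h : d ≤ D) : seg a i d <+: seg a i D :=
  ⟨seg a (i + d) (D - d), by rw [seg_append, Nat.add_sub_cancel' h]⟩

theorem seg_suffix_seg (a : ℕ → E) {i j d D : ℕ} (h : j ≤ i) (h' : i + d = j + D) :
    seg a i d <:+ seg a j D :=
  ⟨seg a j (i - j), by
    have := seg_append a j (i - j) d
    rwa [Nat.add_sub_cancel' h, show i - j + d = D by omega] at this⟩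

theorem seg_infix_seg (a : ℕ → E) {i j d D : ℕ} (h : j ≤ i) (h' : i + d ≤ j + D) :
    seg a i d <:+: seg a j D :=
  (seg_prefix_seg a i (Nat.le_sub_of_add_le' (by omega) : d ≤ j + D - i)).isInfix.trans
    (seg_suffix_seg a h (by omega)).isInfix

theorem seg_add_period (ha : Function.Periodic a n) (i d : ℕ) : seg a (i + n) d = seg a i d := by
  induction d generalizing i with
  | zero => rfl
  | succ d ih => rw [seg_succ, seg_succ, ha i, Nat.add_right_comm i n 1, ih (i + 1)]

theorem seg_add_mul (ha : Function.Periodic a n) (k i d : ℕ) : seg a (i + k * n) d = seg a i d := by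
  induction k with
  | zero => rw [Nat.zero_mul, Nat.add_zero]
  | succ k ih => rw [Nat.succ_mul, ← Nat.add_assoc, seg_add_period ha, ih]

theorem flatten_replicate_seg (ha : Function.Periodic a n) (i L : ℕ) :
    (List.replicate L (seg a i n)).flatten = seg a i (L * n) := by
  induction L with
  | zero => simp [seg]
  | succ L ih =>
    rw [List.replicate_succ, List.flatten_cons, ih, ← seg_add_period ha i (L * n), seg_append]
    congr 1; ring

theorem forall_apply_iff_forall_mem_seg (ha : Function.Periodic a n) (hn : 0 < n) {P : E → Prop} :
    (∀ k, P (a k)) ↔ ∀ x ∈ seg a 1 n, P x := by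
  refine ⟨fun h x hx => ?_, fun h k => ?_⟩
  · obtain ⟨j, -, rfl⟩ := List.mem_map.1 hx
    exact h j
  · rw [← ha.map_mod_nat k]
    rcases Nat.eq_zero_or_pos (k % n) with h0 | h0
    · exact h _ (List.mem_map.2 ⟨n, List.mem_range'_1.2 ⟨hn, by omega⟩, by simpa [h0] using ha 0⟩)
    · exact h _ (List.mem_map.2
        ⟨k % n, List.mem_range'_1.2 ⟨h0, by have := Nat.mod_lt k hn; omega⟩, rfl⟩)

end Segments

theorem List.exists_suffix_append_prefix_of_infix_append {α : Type} {f p q : List α}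
    (h : f <:+: p ++ q) (hp : ¬ f <:+: p) (hq : ¬ f <:+: q) :
    ∃ x y, x ≠ [] ∧ y ≠ [] ∧ x <:+ p ∧ y <+: q ∧ f = x ++ y := by
  obtain ⟨s, t, hst⟩ := h
  rw [List.append_assoc] at hst
  obtain ⟨x, rfl, hft⟩ | ⟨u, rfl, hq'⟩ := List.append_eq_append_iff.1 hst
  · obtain ⟨u, rfl, -⟩ | ⟨y, rfl, rfl⟩ := List.append_eq_append_iff.1 hft
    · exact absurd ⟨s, u, by simp⟩ hp
    · refine ⟨x, y, ?_, ?_, List.suffix_append s x, List.prefix_append y t, rfl⟩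
      · rintro rfl; exact hq ⟨[], t, by simp⟩
      · rintro rfl; exact hp ⟨s, [], by simp⟩
  · exact absurd ⟨u, t, by simp [hq']⟩ hq

theorem List.length_eq_one_of_length_flatten {α : Type} {L : List (List α)}
    (hL : ∀ l ∈ L, l ≠ []) (h : L.flatten.length = L.length) : ∀ l ∈ L, l.length = 1 := by
  induction L with
  | nil => simp
  | cons l L ih =>
    have hL' : ∀ l ∈ L, l ≠ [] := fun l hl => hL l (List.mem_cons_of_mem _ hl)
    have h1 : 0 < l.length := List.length_pos_iff.2 (hL l List.mem_cons_self)
    have h2 : L.length ≤ L.flatten.length := by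
      simpa [List.length_flatten] using List.length_le_sum_of_one_le (L.map List.length)
        (by simpa [Nat.one_le_iff_ne_zero] using hL')
    simp only [List.flatten_cons, List.length_append, List.length_cons] at h
    intro l' hl'
    rcases List.mem_cons.1 hl' with rfl | hl'
    · omega
    · exact ih hL' (by omega) l' hl'

namespace MonomialData

variable {V E : Type} {M : MonomialData V E}

theorem IsZero.mono {l l' : List E} (h : M.IsZero l) (hl : l <:+: l') : M.IsZero l' :=
  let ⟨f, hf, hfl⟩ := h
  ⟨f, hf, hfl.trans hl⟩

theorem Nonzero.infix {l l' : List E} (h : M.Nonzero l) (hl : l' <:+: l) : M.Nonzero l' :=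
  ⟨h.1.infix hl, fun hz => h.2 (hz.mono hl)⟩

theorem nonzero_singleton (x : E) : M.Nonzero [x] :=
  ⟨List.isChain_singleton x, fun ⟨f, hf, hfx⟩ => by
    have := M.F_len f hf
    have := hfx.length_le
    simp at this
    omega⟩

theorem nonzero_of_infix_of_mem_F {f l : List E} (hf : f ∈ M.F) (h : l <:+: f)
    (hl : l.length < f.length) : M.Nonzero l :=
  ⟨(M.F_path f hf).infix h, fun hz => hl.ne (congrArg List.length (M.F_min f hf l h hz))⟩

theorem eq_of_infix_of_mem_F {f g : List E} (hf : f ∈ M.F) (hg : g ∈ M.F) (h : f <:+: g) :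
    f = g :=
  M.F_min g hg f h ⟨f, hf, List.infix_refl f⟩

theorem PerfectPair.append_mem_F {p q : List E} (h : M.PerfectPair p q) : p ++ q ∈ M.F := by
  obtain ⟨-, -, hpnz, hqnz, hcomp, ⟨f, hf, hfpq⟩, hright, hleft⟩ := h
  obtain ⟨x, y, hx, hy, hxp, hyq, rfl⟩ := List.exists_suffix_append_prefix_of_infix_append hfpq
    (fun h => hpnz.2 ⟨_, hf, h⟩) (fun h => hqnz.2 ⟨_, hf, h⟩)
  have hxq : M.Composable x q := fun u hu v hv => by
    obtain ⟨w, rfl⟩ := hxp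
    exact hcomp u (by rwa [List.getLast?_append_of_ne_nil _ hx]) v hv
  have hpx : p <:+ x := hleft x hx (hpnz.infix hxp.isInfix) hxq
    ⟨_, hf, ((List.prefix_append_right_inj x).2 hyq).isInfix⟩
  obtain rfl : x = p := hxp.sublist.antisymm hpx.sublist
  have hxy : M.Composable x y := fun u hu v hv => by
    obtain ⟨w, rfl⟩ := hyq
    exact hcomp u hu v (by rwa [List.head?_append_of_ne_nil _ hy])
  have hqy : q <+: y := hright y hy (hqnz.infix hyq.isInfix) hxy ⟨_, hf, List.infix_refl _⟩
  rwa [hyq.sublist.antisymm hqy.sublist] at hf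

theorem PerfectPair.prefix_of_isZero_append {p q q' : List E} (h : M.PerfectPair p q)
    (hq' : q' ≠ []) (hnz : M.Nonzero q') (hc : M.Composable p q') (hz : M.IsZero (p ++ q')) :
    q <+: q' :=
  h.2.2.2.2.2.2.1 q' hq' hnz hc hz

theorem PerfectPair.suffix_of_isZero_append {p p' q : List E} (h : M.PerfectPair p q)
    (hp' : p' ≠ []) (hnz : M.Nonzero p') (hc : M.Composable p' q) (hz : M.IsZero (p' ++ q)) :
    p <:+ p' :=
  h.2.2.2.2.2.2.2 p' hp' hnz hc hz

theorem PerfectPair.eq_of_cons_mem_F {x : E} {q t : List E} (h : M.PerfectPair [x] q)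
    (ht : x :: t ∈ M.F) : q = t := by
  have hlen := M.F_len _ ht
  have ht0 : t ≠ [] := by rintro rfl; simp at hlen
  have hcomp : M.Composable [x] t := fun u hu v hv => by
    obtain rfl : x = u := by simpa using hu
    exact (List.isChain_cons.1 (M.F_path _ ht)).1 v hv
  have hqt := h.prefix_of_isZero_append ht0
    (nonzero_of_infix_of_mem_F ht (List.suffix_cons x t).isInfix (by simp)) hcomp
    ⟨_, ht, List.infix_refl _⟩
  exact List.cons_injective <| eq_of_infix_of_mem_F h.append_mem_F ht
    ((List.prefix_append_right_inj [x]).2 hqt).isInfix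

theorem PerfectPair.eq_of_append_singleton_mem_F {x : E} {p t : List E} (h : M.PerfectPair p [x])
    (ht : t ++ [x] ∈ M.F) : p = t := by
  have hlen := M.F_len _ ht
  have ht0 : t ≠ [] := by rintro rfl; simp at hlen
  have hcomp : M.Composable t [x] := fun u hu v hv => by
    obtain rfl : x = v := by simpa using hv
    exact (List.isChain_append.1 (M.F_path _ ht)).2.2 u hu x rfl
  have hpt := h.suffix_of_isZero_append ht0
    (nonzero_of_infix_of_mem_F ht (List.prefix_append t [x]).isInfix (by simp)) hcomp
    ⟨_, ht, List.infix_refl _⟩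
  exact List.append_cancel_right <| eq_of_infix_of_mem_F h.append_mem_F ht
    (List.suffix_append_self_iff.2 hpt).isInfix

theorem perfectPair_of_forall_mem_F {p q : List E} (hp : p ≠ []) (hq : q ≠ [])
    (hpnz : M.Nonzero p) (hqnz : M.Nonzero q) (hcomp : M.Composable p q) (hpq : M.IsZero (p ++ q))
    (hright : ∀ x y, x ≠ [] → x <:+ p → x ++ y ∈ M.F → q <+: y)
    (hleft : ∀ x y, y ≠ [] → y <+: q → x ++ y ∈ M.F → p <:+ x) : M.PerfectPair p q := by
  refine ⟨hp, hq, hpnz, hqnz, hcomp, hpq, fun q' _ hq'nz _ ⟨f, hf, hfq'⟩ => ?_,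
    fun p' _ hp'nz _ ⟨f, hf, hfp'⟩ => ?_⟩
  · obtain ⟨x, y, hx, -, hxp, hyq', rfl⟩ := List.exists_suffix_append_prefix_of_infix_append hfq'
      (fun h => hpnz.2 ⟨_, hf, h⟩) (fun h => hq'nz.2 ⟨_, hf, h⟩)
    exact (hright x y hx hxp hf).trans hyq'
  · obtain ⟨x, y, -, hy, hxp', hyq, rfl⟩ := List.exists_suffix_append_prefix_of_infix_append hfp'
      (fun h => hp'nz.2 ⟨_, hf, h⟩) (fun h => hqnz.2 ⟨_, hf, h⟩)
    exact (hleft x y hy hyq hf).trans hxp'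

theorem isPerfect_of_periodic_chain {s : ℕ → List E} {N : ℕ} (hN : 0 < N)
    (hs : Function.Periodic s N) (h : ∀ j, M.PerfectPair (s j) (s (j + 1))) (j : ℕ) :
    M.IsPerfect (s j) :=
  ⟨N, fun k => s (k + j), hN, by simp, fun k => by simp only [Nat.add_right_comm k N j, hs (k + j)],
    fun k => by simpa only [Nat.add_right_comm k 1 j] using h (k + j)⟩

theorem IsPerfect.exists_perfectPair_right {p : List E} (h : M.IsPerfect p) :
    ∃ q, M.PerfectPair p q ∧ M.IsPerfect q :=
  let ⟨_, s, hN, hs0, hs, hpairs⟩ := h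
  ⟨s 1, hs0 ▸ hpairs 0, isPerfect_of_periodic_chain hN hs hpairs 1⟩

theorem IsPerfect.exists_perfectPair_left {p : List E} (h : M.IsPerfect p) :
    ∃ q, M.PerfectPair q p ∧ M.IsPerfect q := by
  obtain ⟨N, s, hN, rfl, hs, hpairs⟩ := h
  refine ⟨s (N - 1), ?_, isPerfect_of_periodic_chain hN hs hpairs (N - 1)⟩
  simpa [Nat.sub_add_cancel hN, ← hs 0] using hpairs (N - 1)

theorem IsPerfect.ne_nil {p : List E} (h : M.IsPerfect p) : p ≠ [] :=
  let ⟨_, hq, _⟩ := h.exists_perfectPair_right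
  hq.1

theorem isPerfect_of_cons_mem_F {x : E} {t : List E} (hx : M.IsPerfect [x]) (ht : x :: t ∈ M.F) :
    M.IsPerfect t :=
  let ⟨_, hq, hqp⟩ := hx.exists_perfectPair_right
  hq.eq_of_cons_mem_F ht ▸ hqp

theorem isPerfect_of_alternating {p q : ℕ → List E} {L : ℕ} (hL : 0 < L)
    (hp : Function.Periodic p L) (hq : Function.Periodic q L)
    (hpq : ∀ k, M.PerfectPair (p k) (q k)) (hqp : ∀ k, M.PerfectPair (q k) (p (k + 1))) :
    M.IsPerfect (p 0) := by
  have h := isPerfect_of_periodic_chain (M := M)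
    (s := fun j => if j % 2 = 0 then p (j / 2) else q (j / 2)) (N := 2 * L) (by omega) ?_ ?_ 0
  · simpa using h
  · intro j
    simp only [show (j + 2 * L) % 2 = j % 2 by omega, show (j + 2 * L) / 2 = j / 2 + L by omega,
      hp _, hq _]
  · intro j
    split_ifs with h0 h1 h1
    · omega
    · rw [show (j + 1) / 2 = j / 2 by omega]; exact hpq _
    · rw [show (j + 1) / 2 = j / 2 + 1 by omega]; exact hqp _
    · omega

theorem coElementary_singleton {x : E} (h : M.IsPerfect [x]) : M.CoElementary [x] := by
  refine ⟨h, fun ⟨q, hq, hqx, hne⟩ => ?_⟩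
  rcases List.prefix_cons_iff.1 hqx with rfl | ⟨t, rfl, ht⟩
  · exact hq.ne_nil rfl
  · exact hne (by rw [List.prefix_nil.1 ht])

theorem CoElementary.eq_singleton_of_prefix_cons {r l : List E} {x : E} (h : M.CoElementary r)
    (hx : M.IsPerfect [x]) (hr : r <+: x :: l) : r = [x] := by
  rcases List.prefix_cons_iff.1 hr with rfl | ⟨t, rfl, -⟩
  · exact absurd rfl h.1.ne_nil
  · by_contra hne
    exact h.2 ⟨[x], hx, ⟨t, rfl⟩, Ne.symm hne⟩

end MonomialData

theorem flatten_map_range_eq_seg {E : Type} {a : ℕ → E} {s : ℕ → List E} {N L i : ℕ}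
    (hN : 0 < N) (hs : Function.Periodic s N) (ha : Function.Periodic a L)
    (h : ((List.range N).map s).flatten = seg a i L) (j : ℕ) :
    ((List.range j).map s).flatten = seg a i ((List.range j).map s).flatten.length := by
  have hmul : ∀ k, ((List.range (k * N)).map s).flatten = seg a i (k * L) := by
    intro k
    induction k with
    | zero => simp [seg]
    | succ k ih =>
      have hblock : (List.range N).map (fun t => s (k * N + t)) = (List.range N).map s :=
        List.map_congr_left fun t _ => by simpa [Nat.add_comm] using hs.nat_mul k t
      rw [Nat.succ_mul, List.range_add, List.map_append, List.flatten_append, ih, List.map_map,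
        Function.comp_def, hblock, h, ← seg_add_mul ha k i L, seg_append, Nat.succ_mul]
  have hpre : ((List.range j).map s).flatten <+: ((List.range (j * N)).map s).flatten := by
    obtain ⟨r, hr⟩ := Nat.exists_eq_add_of_le (Nat.le_mul_of_pos_right j hN)
    rw [hr, List.range_add, List.map_append, List.flatten_append]
    exact List.prefix_append _ _
  rw [hmul] at hpre
  exact eq_seg_of_prefix hpre

theorem exists_lt_le_succ_of_strictMono {P : ℕ → ℕ} (hP : StrictMono P) (h0 : P 0 = 0) {i : ℕ}
    (hi : 0 < i) : ∃ j, P j < i ∧ i ≤ P (j + 1) := by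
  classical
  have hex : ∃ k, i ≤ P k := ⟨i, hP.id_le i⟩
  have hk : Nat.find hex ≠ 0 := fun h => by
    have := Nat.find_spec hex
    rw [h, h0] at this
    omega
  refine ⟨Nat.find hex - 1, not_le.1 (Nat.find_min hex (by omega)), ?_⟩
  rw [Nat.sub_add_cancel (Nat.pos_of_ne_zero hk)]
  exact Nat.find_spec hex

namespace MonomialData

variable {V E : Type} {M : MonomialData V E} {a : ℕ → E} {n : ℕ}

/-- `P j` is the length of `s₀ ⋯ s_{j-1}` for the perfect path sequence `(s_j)` multiplying to a
power of `c`, so the `j`-th path of the sequence is the segment starting at `1 + P j`. -/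
theorem IsUnderlyingCycleOf.exists_cuts {p : List E} (ha : Function.Periodic a n)
    (hc : M.IsUnderlyingCycleOf (seg a 1 n) p) :
    ∃ P : ℕ → ℕ, StrictMono P ∧ P 0 = 0 ∧ ∀ j, M.Nonzero (seg a (1 + P j) (P (j + 1) - P j)) ∧
      seg a (1 + P j) (P (j + 2) - P j) ∈ M.F := by
  obtain ⟨N, s, hN, -, hs, hpairs, ⟨l, -, hflat⟩, -⟩ := hc
  rw [flatten_replicate_seg ha] at hflat
  have hprefix := flatten_map_range_eq_seg hN hs
    (by simpa using ha.nat_mul l : Function.Periodic a (l * n)) hflat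
  obtain ⟨P, hP⟩ : ∃ P : ℕ → ℕ, ∀ j, P j = ((List.range j).map s).flatten.length :=
    ⟨_, fun _ => rfl⟩
  have hPs : ∀ j, P (j + 1) = P j + (s j).length := fun j => by simp [hP, List.range_succ]
  have hseg : ∀ j, s j = seg a (1 + P j) (s j).length := by
    intro j
    have h := hprefix (j + 1)
    rw [← hP, hPs, ← seg_append, List.range_succ, List.map_append, List.flatten_append,
      hprefix j, ← hP] at h
    simpa using h
  have hlen : ∀ j, 0 < (s j).length := fun j => List.length_pos_iff.2 (hpairs j).1
  refine ⟨P, strictMono_nat_of_lt_succ fun j => by rw [hPs]; exact Nat.lt_add_of_pos_right (hlen j),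
    by simp [hP], fun j => ⟨?_, ?_⟩⟩
  · rw [hPs, Nat.add_sub_cancel_left, ← hseg]
    exact (hpairs j).2.2.1
  · have h := (hpairs j).append_mem_F
    rw [hseg j, hseg (j + 1), seg_append_of_eq a (by rw [hPs]; omega)] at h
    convert h using 2
    rw [hPs, hPs]
    omega

theorem IsUnderlyingCycleOf.tgt_eq_src {p : List E} (ha : Function.Periodic a n) (hn : 0 < n)
    (hc : M.IsUnderlyingCycleOf (seg a 1 n) p) (k : ℕ) : M.tgt (a k) = M.src (a (k + 1)) := by
  obtain ⟨P, hP, hP0, hcut⟩ := hc.exists_cuts ha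
  have hpos : ∀ k, 0 < k → M.tgt (a k) = M.src (a (k + 1)) := by
    intro k hk
    obtain ⟨j, hjk, hkj⟩ := exists_lt_le_succ_of_strictMono hP hP0 hk
    have hj := hP (show j + 1 < j + 2 by omega)
    have h := (M.F_path _ (hcut j).2).infix
      (seg_infix_seg a (i := k) (d := 2) (by omega) (by omega))
    simpa [seg, List.range'_succ, List.isChain_pair] using h
  rcases Nat.eq_zero_or_pos k with rfl | hk
  · have e0 : a n = a 0 := by simpa using ha 0
    have e1 : a (n + 1) = a 1 := by simpa [Nat.add_comm] using ha 1
    simpa [e0, e1] using hpos n hn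
  · exact hpos k hk

theorem IsUnderlyingCycleOf.exists_seg_mem_F_ahead {p : List E} (ha : Function.Periodic a n)
    (hc : M.IsUnderlyingCycleOf (seg a 1 n) p) {i : ℕ} (hi : 0 < i) :
    ∃ g, 0 < g ∧ M.Nonzero (seg a i g) ∧ ∃ e, seg a (i + g) e ∈ M.F := by
  obtain ⟨P, hP, hP0, hcut⟩ := hc.exists_cuts ha
  obtain ⟨j, hji, hij⟩ := exists_lt_le_succ_of_strictMono hP hP0 hi
  refine ⟨1 + P (j + 1) - i, by omega,
    (hcut j).1.infix (seg_infix_seg a (by omega) (by omega)), ?_⟩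
  rw [show i + (1 + P (j + 1) - i) = 1 + P (j + 1) by omega]
  exact ⟨_, (hcut (j + 1)).2⟩

theorem isPath_seg (hadj : ∀ k, M.tgt (a k) = M.src (a (k + 1))) (i d : ℕ) :
    M.IsPath (seg a i d) :=
  (List.isChain_map a).2 ((List.isChain_range' i d 1).imp fun x _ h => by subst h; exact hadj x)

theorem composable_seg (hadj : ∀ k, M.tgt (a k) = M.src (a (k + 1))) (i d e : ℕ) :
    M.Composable (seg a i d) (seg a (i + d) e) :=
  (List.isChain_append.1 (by rw [seg_append]; exact isPath_seg hadj i (d + e))).2.2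

/-- The relation starting at `w` cannot lie inside the one starting at `i`, so the part of it
beyond `a_{i+1} ⋯ a_{i+μ}` is a nonzero path, which therefore begins with the right partner `σ`. -/
theorem exists_seg_mem_F_succ (hadj : ∀ k, M.tgt (a k) = M.src (a (k + 1))) {i μ w e : ℕ}
    {σ : List E} (hrel : seg a i (μ + 1) ∈ M.F) (hσ : M.PerfectPair (seg a (i + 1) μ) σ)
    (hw : seg a w e ∈ M.F) (hiw : i < w) (hwμ : w ≤ i + μ) : ∃ d, seg a (i + 1) d ∈ M.F := by
  have hlong : i + μ + 1 < w + e := by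
    by_contra! h
    have := congrArg List.length (eq_of_infix_of_mem_F hw hrel (seg_infix_seg a hiw.le h))
    simp at this
    omega
  have hzw : seg a (i + 1 + μ) (w + e - (i + 1 + μ)) <:+: seg a w e :=
    seg_infix_seg a (by omega) (by omega)
  have hz : M.Nonzero (seg a (i + 1 + μ) (w + e - (i + 1 + μ))) := by
    refine ⟨isPath_seg hadj _ _, fun ⟨f, hf, hfz⟩ => ?_⟩
    have hfw := eq_of_infix_of_mem_F hf hw (hfz.trans hzw)
    have := hfz.length_le
    rw [hfw] at this
    simp at this
    omega
  have hσz := hσ.prefix_of_isZero_append (seg_ne_nil a _ (by omega)) hz (composable_seg hadj _ _ _)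
    ⟨_, hw, by rw [seg_append]; exact seg_infix_seg a (by omega) (by omega)⟩
  have h := hσ.append_mem_F
  rw [eq_seg_of_prefix hσz, seg_append] at h
  exact ⟨_, h⟩

theorem exists_seg_mem_F (ha : Function.Periodic a n) (hn : 0 < n)
    (hadj : ∀ k, M.tgt (a k) = M.src (a (k + 1))) (harrow : ∀ k, M.IsPerfect [a k])
    (hahead : ∀ i, 0 < i → ∃ g, 0 < g ∧ M.Nonzero (seg a i g) ∧ ∃ e, seg a (i + g) e ∈ M.F)
    (i : ℕ) : ∃ d, seg a i d ∈ M.F := by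
  have hstep : ∀ i, 0 < i → (∃ d, seg a i d ∈ M.F) → ∃ d, seg a (i + 1) d ∈ M.F := by
    rintro i hi ⟨d, hd⟩
    obtain ⟨μ, rfl⟩ : ∃ μ, d = μ + 1 := ⟨d - 1, by have := M.F_len _ hd; simp at this; omega⟩
    obtain ⟨σ, hσ, -⟩ :=
      (isPerfect_of_cons_mem_F (harrow i) (by rwa [seg_succ] at hd)).exists_perfectPair_right
    obtain ⟨g, hg0, hg, e, he⟩ := hahead i hi
    have hgμ : g ≤ μ := by
      by_contra! h
      exact hg.2 ⟨_, hd, (seg_prefix_seg a i h).isInfix⟩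
    exact exists_seg_mem_F_succ hadj hd hσ he (by omega) (by omega)
  obtain ⟨g, hg, -, e, he⟩ := hahead 1 one_pos
  have hall : ∀ t, ∃ d, seg a (1 + g + t) d ∈ M.F := by
    intro t
    induction t with
    | zero => exact ⟨e, he⟩
    | succ t ih => exact hstep (1 + g + t) (by omega) ih
  obtain ⟨d, hd⟩ := hall (i + (1 + g) * n - (1 + g))
  rw [Nat.add_sub_cancel' (by nlinarith), seg_add_mul ha] at hd
  exact ⟨d, hd⟩

theorem exists_forall_seg_mem_F_iff (ha : Function.Periodic a n) (hn : 0 < n)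
    (hrel : ∀ i, ∃ d, seg a i d ∈ M.F) : ∃ m, ∀ i d, seg a i d ∈ M.F ↔ d = m + 1 := by
  choose D hD using hrel
  have huniq : ∀ i d, seg a i d ∈ M.F → d = D i := fun i d h => by
    rcases le_total d (D i) with hle | hle
    · exact seg_injective a i (eq_of_infix_of_mem_F h (hD i) (seg_prefix_seg a i hle).isInfix)
    · exact (seg_injective a i
        (eq_of_infix_of_mem_F (hD i) h (seg_prefix_seg a i hle).isInfix)).symm
  have hmono : Monotone D := monotone_nat_of_le_succ fun i => by
    by_contra! h
    have := congrArg List.length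
      (eq_of_infix_of_mem_F (hD (i + 1)) (hD i) (seg_infix_seg a (Nat.le_succ i) (by omega)))
    simp at this
    omega
  have hper : Function.Periodic D n := fun i =>
    huniq i _ (by rw [← seg_add_period ha]; exact hD (i + n))
  have hconst : ∀ i, D i = D 0 := fun i => le_antisymm
    ((hmono (Nat.le_mul_of_pos_right i hn)).trans_eq (by simpa using hper.nat_mul_eq i))
    (hmono i.zero_le)
  have h2 : 2 ≤ D 0 := by simpa using M.F_len _ (hD 0)
  refine ⟨D 0 - 1, fun i d => ⟨fun h => by rw [huniq i d h, hconst]; omega, ?_⟩⟩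
  rintro rfl
  rw [Nat.sub_add_cancel (by omega), ← hconst i]
  exact hD i

theorem nonzero_seg_iff {m : ℕ} (hrel : ∀ i d, seg a i d ∈ M.F ↔ d = m + 1)
    (hadj : ∀ k, M.tgt (a k) = M.src (a (k + 1))) {i d : ℕ} :
    M.Nonzero (seg a i d) ↔ d ≤ m := by
  refine ⟨fun h => ?_, fun h => ⟨isPath_seg hadj i d, fun ⟨f, hf, hfs⟩ => ?_⟩⟩
  · by_contra! hd
    exact h.2 ⟨_, (hrel i (m + 1)).2 rfl, (seg_prefix_seg a i hd).isInfix⟩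
  · obtain ⟨t, ht, hft⟩ := eq_seg_of_infix hfs
    rw [hft] at hf
    have := (hrel _ _).1 hf
    omega

theorem seg_append_mem_F_eq {m : ℕ} (hrel : ∀ i d, seg a i d ∈ M.F ↔ d = m + 1)
    (harrow : ∀ k, M.IsPerfect [a k]) {k e : ℕ} {t : List E}
    (he : 0 < e) (h : seg a k e ++ t ∈ M.F) : seg a k e ++ t = seg a k (m + 1) := by
  obtain ⟨q, hq, -⟩ := (harrow k).exists_perfectPair_right
  obtain ⟨e, rfl⟩ : ∃ e', e = e' + 1 := ⟨e - 1, by omega⟩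
  have hk : a k :: seg a (k + 1) m ∈ M.F := by rw [← seg_succ]; exact (hrel k (m + 1)).2 rfl
  rw [seg_succ, List.cons_append] at h ⊢
  rw [seg_succ, ← hq.eq_of_cons_mem_F h, hq.eq_of_cons_mem_F hk]

theorem append_seg_mem_F_eq {m : ℕ} (hrel : ∀ i d, seg a i d ∈ M.F ↔ d = m + 1)
    (harrow : ∀ k, M.IsPerfect [a k]) {k e : ℕ} {t : List E}
    (he : 0 < e) (hk : m + 1 ≤ k + e) (h : t ++ seg a k e ∈ M.F) :
    t ++ seg a k e = seg a (k + e - (m + 1)) (m + 1) := by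
  obtain ⟨e, rfl⟩ : ∃ e', e = e' + 1 := ⟨e - 1, by omega⟩
  obtain ⟨j, hj⟩ : ∃ j, k + e = j + m := ⟨k + e - m, by omega⟩
  obtain ⟨p, hp, -⟩ := (harrow (k + e)).exists_perfectPair_left
  have hjm : seg a j m ++ [a (k + e)] ∈ M.F := by
    rw [hj, ← seg_concat]
    exact (hrel j (m + 1)).2 rfl
  rw [seg_concat, ← List.append_assoc] at h ⊢
  rw [← hp.eq_of_append_singleton_mem_F h, hp.eq_of_append_singleton_mem_F hjm, hj, ← seg_concat,
    show k + (e + 1) - (m + 1) = j by omega]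

theorem perfectPair_seg {m : ℕ} (hrel : ∀ i d, seg a i d ∈ M.F ↔ d = m + 1)
    (ha : Function.Periodic a n) (hn : 0 < n)
    (hadj : ∀ k, M.tgt (a k) = M.src (a (k + 1))) (harrow : ∀ k, M.IsPerfect [a k]) {i d : ℕ}
    (hd : 0 < d) (hdm : d ≤ m) : M.PerfectPair (seg a i d) (seg a (i + d) (m + 1 - d)) := by
  -- `append_seg_mem_F_eq` needs `m + 1 ≤ k + e`; a shift by a multiple of the period provides it
  wlog hi : m ≤ i generalizing i
  · have h := this (i := i + m * n) (by nlinarith)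
    rwa [seg_add_mul ha, Nat.add_right_comm i (m * n) d, seg_add_mul ha] at h
  refine perfectPair_of_forall_mem_F (seg_ne_nil a i hd) (seg_ne_nil a _ (by omega))
    ((nonzero_seg_iff hrel hadj).2 hdm) ((nonzero_seg_iff hrel hadj).2 (by omega))
    (composable_seg hadj i d _)
    ⟨_, (hrel i (m + 1)).2 rfl, by rw [seg_append, Nat.add_sub_cancel' (by omega : d ≤ m + 1)]⟩
    (fun x y hx hxp hxy => ?_) (fun x y hy hyq hxy => ?_)
  · have hxd : x.length ≤ d := by simpa using hxp.length_le
    have h := seg_append_mem_F_eq hrel harrow (List.length_pos_iff.2 hx)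
      (by rwa [← eq_seg_of_suffix hxp] : seg a (i + (d - x.length)) x.length ++ y ∈ M.F)
    have hy : y = seg a (i + d) (m + 1 - x.length) := by
      have := congrArg (List.drop x.length) h
      rwa [List.drop_left' (seg_length ..), seg_drop,
        show i + (d - x.length) + x.length = i + d by omega] at this
    rw [hy]
    exact seg_prefix_seg a _ (by omega)
  · have hyd : y.length ≤ m + 1 - d := by simpa using hyq.length_le
    have hy0 : 0 < y.length := List.length_pos_iff.2 hy
    have h := append_seg_mem_F_eq hrel harrow hy0 (by omega)
      (by rwa [← eq_seg_of_prefix hyq] : x ++ seg a (i + d) y.length ∈ M.F)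
    have hxl : x.length + y.length = m + 1 := by simpa using congrArg List.length h
    rw [eq_seg_of_prefix (h ▸ List.prefix_append x _ : x <+: seg a _ (m + 1))]
    exact seg_suffix_seg a (by omega) (by omega)

theorem isPerfect_seg {m : ℕ} (hrel : ∀ i d, seg a i d ∈ M.F ↔ d = m + 1)
    (ha : Function.Periodic a n) (hn : 0 < n)
    (hadj : ∀ k, M.tgt (a k) = M.src (a (k + 1))) (harrow : ∀ k, M.IsPerfect [a k]) {i d : ℕ}
    (hd : 0 < d) (hdm : d ≤ m) : M.IsPerfect (seg a i d) := by
  have hshift : ∀ k, i + (k + n) * (m + 1) = i + k * (m + 1) + (m + 1) * n := fun k => by ring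
  have h := isPerfect_of_alternating (M := M) hn
    (p := fun k => seg a (i + k * (m + 1)) d)
    (q := fun k => seg a (i + k * (m + 1) + d) (m + 1 - d))
    (fun k => by simp only [hshift, seg_add_mul ha])
    (fun k => by simp only [hshift, Nat.add_right_comm _ _ d, seg_add_mul ha])
    (fun k => perfectPair_seg hrel ha hn hadj harrow hd hdm) (fun k => ?_)
  · simpa using h
  · have h := perfectPair_seg hrel ha hn hadj harrow (i := i + k * (m + 1) + d) (d := m + 1 - d)
      (by omega) (by omega)
    have e : i + k * (m + 1) + d + (m + 1 - d) = i + (k + 1) * (m + 1) := by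
      rw [Nat.succ_mul]
      omega
    rwa [e, Nat.sub_sub_self (by omega : d ≤ m + 1)] at h

theorem eq_seg_of_isPerfect_of_prefix {m : ℕ} (hrel : ∀ i d, seg a i d ∈ M.F ↔ d = m + 1)
    (harrow : ∀ k, M.IsPerfect [a k]) {k : ℕ} {p : List E}
    (hp : M.IsPerfect p) (hkp : [a k] <+: p) : p = seg a k p.length ∧ p.length ≤ m := by
  obtain ⟨R, hR, -⟩ := hp.exists_perfectPair_right
  obtain ⟨t, rfl⟩ := hkp
  have h := seg_append_mem_F_eq hrel harrow one_pos (t := t ++ R)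
    (by rw [seg_one, ← List.append_assoc]; exact hR.append_mem_F)
  rw [seg_one, ← List.append_assoc] at h
  have hR0 := List.length_pos_iff.2 hR.2.1
  have hlen := congrArg List.length h
  simp only [List.length_append, seg_length] at hlen
  exact ⟨eq_seg_of_prefix (h ▸ List.prefix_append _ R), by simp only [List.length_append]; omega⟩

theorem ncard_isPerfect_prefix {m : ℕ} (hrel : ∀ i d, seg a i d ∈ M.F ↔ d = m + 1)
    (ha : Function.Periodic a n) (hn : 0 < n)
    (hadj : ∀ k, M.tgt (a k) = M.src (a (k + 1))) (harrow : ∀ k, M.IsPerfect [a k]) (k : ℕ) :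
    {p : List E | M.IsPerfect p ∧ [a k] <+: p}.ncard = m := by
  have hset : {p | M.IsPerfect p ∧ [a k] <+: p} = seg a k '' Set.Icc 1 m := by
    ext p
    constructor
    · rintro ⟨hp, hkp⟩
      obtain ⟨hpk, hpm⟩ := eq_seg_of_isPerfect_of_prefix hrel harrow hp hkp
      exact ⟨p.length, ⟨List.length_pos_iff.2 hp.ne_nil, hpm⟩, hpk.symm⟩
    · rintro ⟨d, ⟨hd, hdm⟩, rfl⟩
      refine ⟨isPerfect_seg hrel ha hn hadj harrow hd hdm, ?_⟩
      obtain ⟨d, rfl⟩ : ∃ d', d = d' + 1 := ⟨d - 1, by omega⟩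
      exact ⟨seg a (k + 1) d, (seg_succ a k d).symm⟩
  rw [hset, Set.ncard_image_of_injective _ (seg_injective a k), ← Finset.coe_Icc,
    Set.ncard_coe_finset, Nat.card_Icc, Nat.add_sub_cancel]

theorem isPerfect_of_infix_seg {m : ℕ} (hrel : ∀ i d, seg a i d ∈ M.F ↔ d = m + 1)
    (ha : Function.Periodic a n) (hn : 0 < n)
    (hadj : ∀ k, M.tgt (a k) = M.src (a (k + 1))) (harrow : ∀ k, M.IsPerfect [a k]) {p : List E}
    {i L : ℕ} (hp : p ≠ []) (hnz : M.Nonzero p) (hpL : p <:+: seg a i L) : M.IsPerfect p := by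
  obtain ⟨t, -, hpt⟩ := eq_seg_of_infix hpL
  rw [hpt] at hnz ⊢
  exact isPerfect_seg hrel ha hn hadj harrow (List.length_pos_iff.2 hp)
    ((nonzero_seg_iff hrel hadj).1 hnz)

theorem forall_mem_isPerfect_singleton_iff {c : List E} (hc : c ≠ []) :
    (∀ x ∈ c, M.IsPerfect [x]) ↔ ∃ rs : List (List E), rs ≠ [] ∧ (∀ s ∈ rs, M.CoElementary s) ∧
      rs.flatten = c ∧ rs.length = c.length := by
  refine ⟨fun h => ⟨c.map ([·]), by simpa using hc, ?_, by simp [← List.flatMap_def], by simp⟩, ?_⟩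
  · simpa using fun x hx => coElementary_singleton (h x hx)
  · rintro ⟨rs, -, hco, rfl, hlen⟩ x hx
    obtain ⟨s, hs, hxs⟩ := List.mem_flatten.1 hx
    obtain ⟨y, rfl⟩ := List.length_eq_one_iff.1
      (List.length_eq_one_of_length_flatten (fun s hs => (hco s hs).1.ne_nil) hlen.symm s hs)
    obtain rfl := List.mem_singleton.1 hxs
    exact (hco _ hs).1

end MonomialData

open MonomialData

/-- for an underlying cycle `c = a₁ ⋯ aₙ` consisting of arrows
`aᵢ` (indices mod `n`), the following are equivalent: (1) each arrow `aᵢ` is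
perfect; (2) the number of co-elementary factors of `c` equals its length;
(3) (a) every nonzero nontrivial subpath `p` of a power of `c` with `pq ∈ 𝔽`
for some path `q` is perfect, and (b) `aᵢ ⋯ a_{i+m_c} ∈ 𝔽` for all
`1 ≤ i ≤ n`, where `m_c` is the number of perfect paths having the first
co-elementary factor of `c` as a left divisor. -/
theorem arrows_perfect_tfae {V E : Type} (M : MonomialData V E)
    (n : ℕ) (hn : 0 < n) (a : ℕ → E)
    (hper : ∀ k, a (k + n) = a k)
    (hc : ∃ p, M.IsUnderlyingCycleOf ((List.range n).map fun k => a (k + 1)) p)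
    (r1 : List E) (m : ℕ)
    (hfac : ∃ rs : List (List E), rs ≠ [] ∧ (∀ s ∈ rs, M.CoElementary s) ∧
      rs.flatten = (List.range n).map (fun k => a (k + 1)) ∧
      rs.head? = some r1)
    (hm : {p : List E | M.IsPerfect p ∧ r1 <+: p}.ncard = m) :
    ((∀ k, M.IsPerfect [a k]) ↔
      (∃ rs : List (List E), rs ≠ [] ∧ (∀ s ∈ rs, M.CoElementary s) ∧
        rs.flatten = (List.range n).map (fun k => a (k + 1)) ∧
        rs.length = n)) ∧
    ((∀ k, M.IsPerfect [a k]) ↔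
      ((∀ (mm : ℕ) (p : List E), 0 < mm → p ≠ [] → M.Nonzero p →
          p <:+: (List.replicate mm
            ((List.range n).map fun k => a (k + 1))).flatten →
          (∃ q, (p ++ q) ∈ M.F) → M.IsPerfect p) ∧
        (∀ i, 1 ≤ i → i ≤ n →
          ((List.range (m + 1)).map fun t => a (i + t)) ∈ M.F))) := by
  simp only [map_range_add_one_eq_seg, map_range_eq_seg, flatten_replicate_seg hper] at hc hfac ⊢
  obtain ⟨p, hc⟩ := hc
  have harrows := forall_apply_iff_forall_mem_seg hper hn (P := fun x => M.IsPerfect [x])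
  refine ⟨harrows.trans ((forall_mem_isPerfect_singleton_iff (seg_ne_nil a 1 hn)).trans
    (by simp only [seg_length])), fun h1 => ?_, fun ⟨h3a, h3b⟩ => ?_⟩
  · have hadj := hc.tgt_eq_src hper hn
    obtain ⟨m', hrel⟩ := exists_forall_seg_mem_F_iff hper hn
      (exists_seg_mem_F hper hn hadj h1 fun i hi => hc.exists_seg_mem_F_ahead hper hi)
    obtain ⟨_ | ⟨r, rs⟩, hrs, hco, hflat, hhead⟩ := hfac
    · exact absurd rfl hrs
    obtain rfl : r = r1 := Option.some.inj hhead
    obtain rfl : r = [a 1] := (hco r List.mem_cons_self).eq_singleton_of_prefix_cons (h1 1)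
      (l := seg a 2 (n - 1)) (by
        rw [← seg_succ, Nat.sub_add_cancel hn, ← hflat]
        exact List.prefix_append r rs.flatten)
    rw [ncard_isPerfect_prefix hrel hper hn hadj h1] at hm
    subst hm
    exact ⟨fun mm p _ hp hnz hpc _ => isPerfect_of_infix_seg hrel hper hn hadj h1 hp hnz hpc,
      fun i _ _ => (hrel i _).2 rfl⟩
  · refine harrows.2 fun x hx => ?_
    obtain ⟨i, hi, rfl⟩ := List.mem_map.1 hx
    rw [List.mem_range'_1] at hi
    exact h3a 1 [a i] one_pos (List.cons_ne_nil _ _) (nonzero_singleton _)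
      (by rw [Nat.one_mul, ← seg_one]; exact seg_infix_seg a hi.1 (by omega))
      ⟨seg a (i + 1) m, by rw [List.singleton_append, ← seg_succ]; exact h3b i hi.1 (by omega)⟩
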